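/- Let H be a complex Hilbert space, A a positive bounded self-adjoint operator, and T a bounded operator with AT = T*A. Then there exists a constant C > 0 such that T*AT ≤ C·A in the operator order, i.e., ⟨ATx, Tx⟩ ≤ C⟨Ax, x⟩ for all x ∈ H. -/

import Mathlib

/-!
Write `a m := re ⟪A (Tᵐ x), Tᵐ x⟫`. Since `A T = T† A`, `a m = re ⟪A x, T²ᵐ x⟫`, so the
Cauchy–Schwarz inequality for the semi-inner product `⟪A ·, ·⟫` gives `a m ^ 2 ≤ a 0 * a (2 m)`.
Iterating, `a 1 ^ 2ⁿ ≤ a 0 ^ (2ⁿ - 1) * a 2ⁿ`, while crudely `a m ≤ ‖A‖ ‖x‖² ‖T‖²ᵐ`; taking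
`2ⁿ`-th roots and letting `n → ∞` gives `a 1 ≤ ‖T‖² a 0`.
-/

open scoped InnerProductSpace
open RCLike

theorem pow_two_pow_le_of_sq_le {b : ℕ → ℝ} (hb : ∀ m, 0 ≤ b m)
    (hsq : ∀ m, b m ^ 2 ≤ b (2 * m)) (n : ℕ) : b 1 ^ 2 ^ n ≤ b (2 ^ n) := by
  induction n with
  | zero => simp
  | succ n ih =>
    have hb1 := hb 1
    calc b 1 ^ 2 ^ (n + 1) = (b 1 ^ 2 ^ n) ^ 2 := by rw [pow_succ, pow_mul]
      _ ≤ b (2 ^ n) ^ 2 := by gcongr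
      _ ≤ b (2 ^ (n + 1)) := by rw [pow_succ' 2 n]; exact hsq _

theorem le_one_of_forall_pow_two_pow_le {x C : ℝ} (h : ∀ n : ℕ, x ^ 2 ^ n ≤ C) : x ≤ 1 := by
  by_contra! hx
  obtain ⟨n, hn⟩ := pow_unbounded_of_one_lt C hx
  exact (hn.trans_le (pow_le_pow_right₀ hx.le n.lt_two_pow_self.le)).not_ge (h n)

theorem le_mul_of_sq_le_mul_double {a : ℕ → ℝ} {K r : ℝ} (ha : ∀ m, 0 ≤ a m) (hr : 0 ≤ r)
    (hsq : ∀ m, a m ^ 2 ≤ a 0 * a (2 * m)) (hbound : ∀ m, a m ≤ K * r ^ m) :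
    a 1 ≤ r * a 0 := by
  rcases (ha 0).eq_or_lt with h0 | h0
  · have : a 1 ^ 2 ≤ 0 := by simpa [← h0] using hsq 1
    rw [← h0, mul_zero]
    exact (sq_nonpos_iff _).1 this |>.le
  rcases hr.eq_or_lt with rfl | hr
  · simpa using hbound 1
  -- normalise so that Cauchy–Schwarz reads `b m ^ 2 ≤ b (2 m)` and `b` is bounded
  set b : ℕ → ℝ := fun m => a m / (a 0 * r ^ m) with hb_def
  have hb : ∀ m, 0 ≤ b m := fun m => div_nonneg (ha m) (by positivity)
  have hbsq : ∀ m, b m ^ 2 ≤ b (2 * m) := by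
    intro m
    rw [hb_def, div_pow, div_le_div_iff₀ (by positivity) (by positivity)]
    calc a m ^ 2 * (a 0 * r ^ (2 * m)) ≤ a 0 * a (2 * m) * (a 0 * r ^ (2 * m)) := by
          gcongr; exact hsq m
      _ = a (2 * m) * (a 0 * r ^ m) ^ 2 := by ring
  have hbbdd : ∀ m, b m ≤ K / a 0 := by
    intro m
    rw [hb_def, div_le_div_iff₀ (by positivity) h0]
    calc a m * a 0 ≤ K * r ^ m * a 0 := by gcongr; exact hbound m
      _ = K * (a 0 * r ^ m) := by ring
  have hb1 : b 1 ≤ 1 := le_one_of_forall_pow_two_pow_le fun n =>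
    (pow_two_pow_le_of_sq_le hb hbsq n).trans (hbbdd _)
  simp only [hb_def, pow_one] at hb1
  rwa [div_le_one (by positivity), mul_comm] at hb1

namespace ContinuousLinearMap

theorem norm_pow_apply_le {𝕜 E : Type*} [NontriviallyNormedField 𝕜] [SeminormedAddCommGroup E]
    [NormedSpace 𝕜 E] (T : E →L[𝕜] E) (m : ℕ) (x : E) : ‖(T ^ m) x‖ ≤ ‖T‖ ^ m * ‖x‖ := by
  induction m with
  | zero => simp
  | succ m ih =>
    calc ‖(T ^ (m + 1)) x‖ = ‖T ((T ^ m) x)‖ := by rw [pow_succ', mul_apply_eq_comp]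
      _ ≤ ‖T‖ * (‖T‖ ^ m * ‖x‖) := T.le_opNorm_of_le ih
      _ = ‖T‖ ^ (m + 1) * ‖x‖ := by ring

variable {𝕜 E : Type*} [RCLike 𝕜] [NormedAddCommGroup E] [InnerProductSpace 𝕜 E]

@[reducible]
def IsPositive.preInnerProductCore {A : E →L[𝕜] E} (hA : A.IsPositive) :
    PreInnerProductSpace.Core 𝕜 E where
  inner x y := ⟪A x, y⟫_𝕜
  conj_inner_symm x y := by
    rw [inner_conj_symm, hA.inner_left_eq_inner_right]
  re_inner_nonneg := hA.re_inner_nonneg_left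
  add_left x y z := by simp only [map_add, inner_add_left]
  smul_left x y r := by simp only [map_smul, inner_smul_left]

theorem IsPositive.re_inner_sq_le {A : E →L[𝕜] E} (hA : A.IsPositive) (x y : E) :
    re ⟪A x, y⟫_𝕜 ^ 2 ≤ re ⟪A x, x⟫_𝕜 * re ⟪A y, y⟫_𝕜 := by
  have hsymm : ‖⟪A y, x⟫_𝕜‖ = ‖⟪A x, y⟫_𝕜‖ := by
    rw [hA.inner_left_eq_inner_right, ← inner_conj_symm, norm_conj]
  calc re ⟪A x, y⟫_𝕜 ^ 2 ≤ ‖⟪A x, y⟫_𝕜‖ ^ 2 :=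
        sq_le_sq.2 ((abs_re_le_norm _).trans (le_abs_self _))
    _ = ‖⟪A x, y⟫_𝕜‖ * ‖⟪A y, x⟫_𝕜‖ := by rw [hsymm, sq]
    _ ≤ re ⟪A x, x⟫_𝕜 * re ⟪A y, y⟫_𝕜 :=
        InnerProductSpace.Core.inner_mul_inner_self_le (c := hA.preInnerProductCore) x y

theorem re_inner_apply_pow_le (A T : E →L[𝕜] E) (m : ℕ) (x : E) :
    re ⟪A ((T ^ m) x), (T ^ m) x⟫_𝕜 ≤ ‖A‖ * ‖x‖ ^ 2 * (‖T‖ ^ 2) ^ m := by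
  have hTm := T.norm_pow_apply_le m x
  calc re ⟪A ((T ^ m) x), (T ^ m) x⟫_𝕜 ≤ ‖A ((T ^ m) x)‖ * ‖(T ^ m) x‖ := re_inner_le_norm _ _
    _ ≤ ‖A‖ * (‖T‖ ^ m * ‖x‖) * (‖T‖ ^ m * ‖x‖) := by
        gcongr
        exact A.le_opNorm_of_le hTm
    _ = ‖A‖ * ‖x‖ ^ 2 * (‖T‖ ^ 2) ^ m := by ring

variable [CompleteSpace E] {A T : E →L[𝕜] E}

theorem inner_apply_pow_eq_inner_pow_two_mul (hT : SemiconjBy A T (adjoint T)) (m : ℕ) (x : E) :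
    ⟪A ((T ^ m) x), (T ^ m) x⟫_𝕜 = ⟪A x, (T ^ (2 * m)) x⟫_𝕜 := by
  have hTm : A * T ^ m = adjoint (T ^ m) * A := by
    rw [← star_eq_adjoint, star_pow, star_eq_adjoint]
    exact hT.pow_right m
  rw [← mul_apply_eq_comp, hTm, mul_apply_eq_comp, adjoint_inner_left, two_mul, pow_add,
    mul_apply_eq_comp]

theorem re_inner_apply_apply_le_sq_norm_mul (hA : A.IsPositive) (hT : SemiconjBy A T (adjoint T))
    (x : E) : re ⟪A (T x), T x⟫_𝕜 ≤ ‖T‖ ^ 2 * re ⟪A x, x⟫_𝕜 := by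
  have hsq (m : ℕ) : re ⟪A ((T ^ m) x), (T ^ m) x⟫_𝕜 ^ 2 ≤
      re ⟪A x, x⟫_𝕜 * re ⟪A ((T ^ (2 * m)) x), (T ^ (2 * m)) x⟫_𝕜 := by
    rw [inner_apply_pow_eq_inner_pow_two_mul hT]
    exact hA.re_inner_sq_le _ _
  simpa using le_mul_of_sq_le_mul_double (fun m => hA.re_inner_nonneg_left _) (by positivity)
    (by simpa using hsq) (re_inner_apply_pow_le A T · x)

end ContinuousLinearMap

/-- symmetrizable operators are bounded in the weaker seminorm:
there is `C > 0` with `T* A T ≤ C A`, i.e. `⟨A T x, T x⟩ ≤ C ⟨A x, x⟩`. -/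
theorem stmt3 {H : Type*} [NormedAddCommGroup H] [InnerProductSpace ℂ H] [CompleteSpace H]
    (A T : H →L[ℂ] H) (hA : IsSelfAdjoint A)
    (hApos : ∀ x : H, 0 ≤ (⟪A x, x⟫_ℂ).re)
    (hsym : A ∘L T = (ContinuousLinearMap.adjoint T) ∘L A) :
    ∃ C : ℝ, 0 < C ∧ ∀ x : H, (⟪A (T x), T x⟫_ℂ).re ≤ C * (⟪A x, x⟫_ℂ).re := by
  have hApos' : A.IsPositive := ContinuousLinearMap.isPositive_def'.2 ⟨hA, hApos⟩
  refine ⟨‖T‖ ^ 2 + 1, by positivity, fun x => ?_⟩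
  calc (⟪A (T x), T x⟫_ℂ).re ≤ ‖T‖ ^ 2 * (⟪A x, x⟫_ℂ).re :=
        ContinuousLinearMap.re_inner_apply_apply_le_sq_norm_mul hApos' hsym x
    _ ≤ (‖T‖ ^ 2 + 1) * (⟪A x, x⟫_ℂ).re := 
        mul_le_mul_of_nonneg_right (by linarith) (hApos x)
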